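/- arXiv:1911.05565 — 2 statements merged into one kernel-verified Lean document; each statement's English description precedes it below -/
import Mathlib

section
/- A permutation avoids both patterns 2413 and 3142 if and only if it is separable, i.e., it can be obtained from the singleton permutation by iterated direct sums and skew sums. -/
open Equiv Finset Filter Topology

/-- Direct sum of permutations: `(σ⊕τ)(i)=σ(i)` for `i<k`, `(σ⊕τ)(k+i)=k+τ(i)`. -/
def directSum {k l : ℕ} (σ : Equiv.Perm (Fin k)) (τ : Equiv.Perm (Fin l)) :
    Equiv.Perm (Fin (k + l)) :=
  finSumFinEquiv.symm.trans ((Equiv.sumCongr σ τ).trans finSumFinEquiv)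

/-- Skew sum of permutations: `(σ⊖τ)(i)=σ(i)+l` for `i<k`, `(σ⊖τ)(k+i)=τ(i)`. -/
def skewSum {k l : ℕ} (σ : Equiv.Perm (Fin k)) (τ : Equiv.Perm (Fin l)) :
    Equiv.Perm (Fin (k + l)) :=
  finSumFinEquiv.symm.trans ((Equiv.sumCongr σ τ).trans
    ((Equiv.sumComm (Fin k) (Fin l)).trans (finSumFinEquiv.trans (finCongr (Nat.add_comm l k)))))

/-- A permutation is separable if it is the singleton or a direct or skew sum of
two separable permutations. -/
inductive Separable : {n : ℕ} → Equiv.Perm (Fin n) → Prop where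
  | single : Separable (Equiv.refl (Fin 1))
  | dsum {k l : ℕ} {σ : Equiv.Perm (Fin k)} {τ : Equiv.Perm (Fin l)} :
      Separable σ → Separable τ → Separable (directSum σ τ)
  | ssum {k l : ℕ} {σ : Equiv.Perm (Fin k)} {τ : Equiv.Perm (Fin l)} :
      Separable σ → Separable τ → Separable (skewSum σ τ)

/-- `numSep n` = number of separable permutations of `[n]` (denoted `s_n`). -/
noncomputable def numSep (n : ℕ) : ℕ := Nat.card {σ : Equiv.Perm (Fin n) // Separable σ}

/-- `σ` contains the pattern `π` if some subsequence of `σ` is order-isomorphic to `π`. -/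
def ContainsPattern {n m : ℕ} (σ : Equiv.Perm (Fin n)) (π : Equiv.Perm (Fin m)) : Prop :=
  ∃ f : Fin m → Fin n, StrictMono f ∧ ∀ i j : Fin m, π i < π j ↔ σ (f i) < σ (f j)

def AvoidsPattern {n m : ℕ} (σ : Equiv.Perm (Fin n)) (π : Equiv.Perm (Fin m)) : Prop :=
  ¬ ContainsPattern σ π

/-- The pattern 2413 (zero-based one-line notation 1,3,0,2). -/
def perm2413 : Equiv.Perm (Fin 4) := ⟨![1, 3, 0, 2], ![2, 0, 3, 1], by decide, by decide⟩

/-- The pattern 3142 (zero-based one-line notation 2,0,3,1). -/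
def perm3142 : Equiv.Perm (Fin 4) := ⟨![2, 0, 3, 1], ![1, 3, 0, 2], by decide, by decide⟩

/-!
Both 2413 and 3142 are sum-indecomposable, and complementation swaps them as well as direct and
skew sums; so an occurrence of either pattern in `σ ⊕ τ` or `σ ⊖ τ` lies inside `σ` or `τ`, and
separable permutations avoid both.

Conversely, let `σ` avoid both. By descending induction on `a`, the entries of `σ` at positions
`≥ a` split as a direct or a skew sum. If those after `a` split as a direct sum at `k'` and the
entry at `a` lies above some entry right of `k'`, let `i` be the first position after `a` carrying
a larger entry: no entry below `σ a` can follow `i`, since it would form a 3142 with the entries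
at `a`, `a + 1`, `i`, so the split moves to `i`; if there is no such `i`, the entry at `a` is a
skew summand on its own. The skew case is the complement of this one, and `a = 0` decomposes `σ`.
-/

lemma ContainsPattern.le {n m : ℕ} {σ : Perm (Fin n)} {π : Perm (Fin m)}
    (h : ContainsPattern σ π) : m ≤ n := by
  obtain ⟨f, hf, -⟩ := h
  simpa using Fintype.card_le_of_injective f hf.injective

lemma ContainsPattern.trans {n m r : ℕ} {ρ : Perm (Fin n)} {σ : Perm (Fin m)} {π : Perm (Fin r)}
    (hρσ : ContainsPattern ρ σ) (hσπ : ContainsPattern σ π) : ContainsPattern ρ π := by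
  obtain ⟨g, hg, hgσ⟩ := hρσ
  obtain ⟨f, hf, hfπ⟩ := hσπ
  exact ⟨g ∘ f, hg.comp hf, fun i j => (hfπ i j).trans (hgσ _ _)⟩

lemma containsPattern_of_forall_mem_range {n m r : ℕ} {ρ : Perm (Fin n)} {σ : Perm (Fin m)}
    {π : Perm (Fin r)} {g : Fin m → Fin n} (hg : StrictMono g)
    (hgσ : ∀ i j, σ i < σ j ↔ ρ (g i) < ρ (g j)) {f : Fin r → Fin n} (hf : StrictMono f)
    (hfπ : ∀ i j, π i < π j ↔ ρ (f i) < ρ (f j)) (hfg : ∀ i, ∃ j, g j = f i) :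
    ContainsPattern σ π := by
  choose f' hf' using hfg
  refine ⟨f', fun i j hij => hg.lt_iff_lt.1 ?_, fun i j => ?_⟩
  · simpa only [hf'] using hf hij
  · rw [hgσ, hf', hf', hfπ]

section DirectSum

variable {k l : ℕ} (σ : Perm (Fin k)) (τ : Perm (Fin l))

@[simp] lemma directSum_castAdd (i : Fin k) :
    directSum σ τ (Fin.castAdd l i) = Fin.castAdd l (σ i) := by
  simp [directSum]

@[simp] lemma directSum_natAdd (j : Fin l) :
    directSum σ τ (Fin.natAdd k j) = Fin.natAdd k (τ j) := by
  simp [directSum]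

lemma directSum_castAdd_lt_castAdd_iff {i j : Fin k} :
    directSum σ τ (Fin.castAdd l i) < directSum σ τ (Fin.castAdd l j) ↔ σ i < σ j := by
  rw [directSum_castAdd, directSum_castAdd, (Fin.strictMono_castAdd l).lt_iff_lt]

lemma directSum_natAdd_lt_natAdd_iff {i j : Fin l} :
    directSum σ τ (Fin.natAdd k i) < directSum σ τ (Fin.natAdd k j) ↔ τ i < τ j := by
  rw [directSum_natAdd, directSum_natAdd, (Fin.strictMono_natAdd k).lt_iff_lt]

lemma containsPattern_directSum_left : ContainsPattern (directSum σ τ) σ :=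
  ⟨Fin.castAdd l, Fin.strictMono_castAdd l, fun _ _ => (directSum_castAdd_lt_castAdd_iff σ τ).symm⟩

lemma containsPattern_directSum_right : ContainsPattern (directSum σ τ) τ :=
  ⟨Fin.natAdd k, Fin.strictMono_natAdd k, fun _ _ => (directSum_natAdd_lt_natAdd_iff σ τ).symm⟩

end DirectSum

def complement {n : ℕ} (σ : Perm (Fin n)) : Perm (Fin n) := σ.trans Fin.revPerm

@[simp] lemma complement_apply {n : ℕ} (σ : Perm (Fin n)) (i : Fin n) :
    complement σ i = (σ i).rev := rfl

@[simp] lemma complement_complement {n : ℕ} (σ : Perm (Fin n)) :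
    complement (complement σ) = σ := by
  ext i; simp

lemma complement_lt_complement {n : ℕ} {σ : Perm (Fin n)} {i j : Fin n} :
    complement σ i < complement σ j ↔ σ j < σ i := by simp

lemma containsPattern_complement_complement {n m : ℕ} {σ : Perm (Fin n)} {π : Perm (Fin m)} :
    ContainsPattern (complement σ) (complement π) ↔ ContainsPattern σ π := by
  simp only [ContainsPattern, complement_apply, Fin.rev_lt_rev]
  exact exists_congr fun f => and_congr_right fun _ => forall_comm.trans (by rfl)

lemma containsPattern_complement_iff {n m : ℕ} {σ : Perm (Fin n)} {π : Perm (Fin m)} :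
    ContainsPattern (complement σ) π ↔ ContainsPattern σ (complement π) := by
  rw [← containsPattern_complement_complement, complement_complement]

lemma complement_perm3142 : complement perm3142 = perm2413 := by decide

lemma complement_directSum {k l : ℕ} (σ : Perm (Fin k)) (τ : Perm (Fin l)) :
    complement (directSum σ τ) = skewSum (complement σ) (complement τ) := by
  ext x
  induction x using Fin.addCases with
  | left x => simp [directSum, skewSum]; omega
  | right x => simp [directSum, skewSum]; omega

lemma complement_skewSum {k l : ℕ} (σ : Perm (Fin k)) (τ : Perm (Fin l)) :
    complement (skewSum σ τ) = directSum (complement σ) (complement τ) := by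
  rw [← complement_complement (directSum _ _), complement_directSum, complement_complement,
    complement_complement]

/-- `IsSumCut σ 0 k`: `σ` is a direct sum split after its first `k` entries; for `a > 0`, the same
for the entries of `σ` at positions `≥ a`. -/
def IsSumCut {n : ℕ} (σ : Perm (Fin n)) (a k : ℕ) : Prop :=
  ∀ p q : Fin n, a ≤ p.val → p.val < k → k ≤ q.val → σ p < σ q

lemma isSumCut_directSum {k l : ℕ} (σ : Perm (Fin k)) (τ : Perm (Fin l)) :
    IsSumCut (directSum σ τ) 0 k := by
  intro p q _ hp hq
  obtain ⟨i, rfl⟩ : ∃ i, p = Fin.castAdd l i := ⟨p.castLT hp, rfl⟩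
  obtain ⟨j, rfl⟩ : ∃ j, Fin.natAdd k j = q := (Fin.range_natAdd k l).ge hq
  simp only [directSum_castAdd, directSum_natAdd, Fin.lt_def, Fin.val_castAdd, Fin.val_natAdd]
  omega

def IsSumIndecomposable {m : ℕ} (π : Perm (Fin m)) : Prop :=
  ∀ c, 0 < c → c < m → ¬ IsSumCut π 0 c

lemma isSumIndecomposable_perm2413 : IsSumIndecomposable perm2413 := by
  intro c hc0 hc4
  interval_cases c <;> unfold IsSumCut <;> decide

lemma isSumIndecomposable_perm3142 : IsSumIndecomposable perm3142 := by
  intro c hc0 hc4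
  interval_cases c <;> unfold IsSumCut <;> decide

lemma forall_lt_or_forall_le_of_isSumCut {n m k : ℕ} {ρ : Perm (Fin n)} {π : Perm (Fin m)}
    (hρ : IsSumCut ρ 0 k) (hπ : IsSumIndecomposable π) {f : Fin m → Fin n} (hf : StrictMono f)
    (hfπ : ∀ i j, π i < π j ↔ ρ (f i) < ρ (f j)) :
    (∀ i, (f i).val < k) ∨ (∀ i, k ≤ (f i).val) := by
  by_contra! ⟨⟨i, hi⟩, ⟨j, hj⟩⟩
  obtain ⟨c, hc, hmin⟩ : ∃ c, k ≤ (f c).val ∧ ∀ p < c, ¬ k ≤ (f p).val :=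
    have hex : ∃ c, k ≤ (f c).val := ⟨i, hi⟩
    ⟨Fin.find _ hex, Fin.find_spec hex, fun _ => Fin.find_min hex⟩
  have hjc : j < c := lt_of_not_ge fun hcj => by
    have := hf.monotone hcj
    omega
  refine hπ c (by omega) c.is_lt fun p q _ hp hq => (hfπ p q).2 (hρ _ _ (Nat.zero_le _) ?_ ?_)
  · exact not_le.1 (hmin p hp)
  · exact hc.trans (hf.monotone (show c ≤ q from hq))

lemma ContainsPattern.of_directSum {k l m : ℕ} {σ : Perm (Fin k)} {τ : Perm (Fin l)}
    {π : Perm (Fin m)} (hπ : IsSumIndecomposable π) (h : ContainsPattern (directSum σ τ) π) :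
    ContainsPattern σ π ∨ ContainsPattern τ π := by
  obtain ⟨f, hf, hfπ⟩ := h
  rcases forall_lt_or_forall_le_of_isSumCut (isSumCut_directSum σ τ) hπ hf hfπ with hlow | hhigh
  · exact .inl <| containsPattern_of_forall_mem_range (Fin.strictMono_castAdd l)
      (fun _ _ => (directSum_castAdd_lt_castAdd_iff σ τ).symm) hf hfπ
      fun i => ⟨_, Fin.castAdd_castLT l _ (hlow i)⟩
  · exact .inr <| containsPattern_of_forall_mem_range (Fin.strictMono_natAdd k)
      (fun _ _ => (directSum_natAdd_lt_natAdd_iff σ τ).symm) hf hfπ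
      fun i => (Fin.range_natAdd k l).ge (hhigh i)

lemma AvoidsPattern.directSum {k l m : ℕ} {σ : Perm (Fin k)} {τ : Perm (Fin l)}
    {π : Perm (Fin m)} (hπ : IsSumIndecomposable π) (hσ : AvoidsPattern σ π)
    (hτ : AvoidsPattern τ π) : AvoidsPattern (directSum σ τ) π :=
  fun h => (h.of_directSum hπ).elim hσ hτ

lemma AvoidsPattern.skewSum {k l m : ℕ} {σ : Perm (Fin k)} {τ : Perm (Fin l)}
    {π : Perm (Fin m)} (hπ : IsSumIndecomposable (complement π)) (hσ : AvoidsPattern σ π)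
    (hτ : AvoidsPattern τ π) : AvoidsPattern (skewSum σ τ) π := by
  rw [AvoidsPattern, ← containsPattern_complement_complement, complement_skewSum]
  exact AvoidsPattern.directSum hπ (mt containsPattern_complement_complement.1 hσ)
    (mt containsPattern_complement_complement.1 hτ)

theorem Separable.avoidsPattern_perm2413_perm3142 {n : ℕ} {σ : Perm (Fin n)}
    (h : Separable σ) : AvoidsPattern σ perm2413 ∧ AvoidsPattern σ perm3142 := by
  have hcompl2413 : IsSumIndecomposable (complement perm2413) := by
    rw [← complement_perm3142, complement_complement]
    exact isSumIndecomposable_perm3142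
  have hcompl3142 : IsSumIndecomposable (complement perm3142) :=
    complement_perm3142 ▸ isSumIndecomposable_perm2413
  induction h with
  | single => exact ⟨fun h => absurd h.le (by decide), fun h => absurd h.le (by decide)⟩
  | dsum _ _ ihσ ihτ =>
    exact ⟨ihσ.1.directSum isSumIndecomposable_perm2413 ihτ.1,
      ihσ.2.directSum isSumIndecomposable_perm3142 ihτ.2⟩
  | ssum _ _ ihσ ihτ =>
    exact ⟨ihσ.1.skewSum hcompl2413 ihτ.1, ihσ.2.skewSum hcompl3142 ihτ.2⟩

lemma containsPattern_perm3142 {n : ℕ} {σ : Perm (Fin n)} {p₀ p₁ p₂ p₃ : Fin n}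
    (h₀₁ : p₀ < p₁) (h₁₂ : p₁ < p₂) (h₂₃ : p₂ < p₃)
    (h₁₃ : σ p₁ < σ p₃) (h₃₀ : σ p₃ < σ p₀) (h₀₂ : σ p₀ < σ p₂) :
    ContainsPattern σ perm3142 := by
  refine ⟨![p₀, p₁, p₂, p₃], Fin.strictMono_iff_lt_succ.2 fun i => ?_, fun i j => ?_⟩
  · fin_cases i <;> assumption
  · fin_cases i <;> fin_cases j <;> simp [perm3142] <;> order

lemma exists_isSumCut_or_complement_of_isSumCut_succ {n : ℕ} {σ : Perm (Fin n)}
    (h3142 : AvoidsPattern σ perm3142) {a k' : ℕ} (hak' : a + 1 < k') (hk'n : k' < n)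
    (hcut : IsSumCut σ (a + 1) k') :
    ∃ k, a < k ∧ k < n ∧ (IsSumCut σ a k ∨ IsSumCut (complement σ) a k) := by
  obtain ⟨pa, hpa⟩ : ∃ pa : Fin n, pa.val = a := ⟨⟨a, by omega⟩, rfl⟩
  obtain ⟨pa₁, hpa₁⟩ : ∃ pa₁ : Fin n, pa₁.val = a + 1 := ⟨⟨a + 1, by omega⟩, rfl⟩
  by_cases hbelow : ∀ q : Fin n, k' ≤ q.val → σ pa < σ q
  · refine ⟨k', by omega, hk'n, .inl fun p q hp hpk hq => ?_⟩
    rcases hp.eq_or_lt with hp | hp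
    · obtain rfl : p = pa := Fin.ext (by omega)
      exact hbelow q hq
    · exact hcut p q hp hpk hq
  push Not at hbelow
  obtain ⟨q₀, hq₀, hq₀a⟩ := hbelow
  by_cases habove : ∃ q : Fin n, a < q.val ∧ σ pa < σ q
  · obtain ⟨i, ⟨hai, hi⟩, hmin⟩ :
        ∃ i, (a < i.val ∧ σ pa < σ i) ∧ ∀ p < i, ¬ (a < p.val ∧ σ pa < σ p) :=
      ⟨Fin.find _ habove, Fin.find_spec habove, fun _ => Fin.find_min habove⟩
    have hk'i : k' ≤ i.val := by
      by_contra! hik'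
      exact (hcut i q₀ hai hik' hq₀).not_ge (hq₀a.trans hi.le)
    -- an entry below `σ a` after position `i` would complete a 3142 with positions `a, a + 1, i`
    have hright : ∀ q : Fin n, i ≤ q → σ pa < σ q := by
      intro q hiq
      rcases hiq.eq_or_lt with rfl | hiq
      · exact hi
      by_contra! hqa
      have hqa : σ q < σ pa := hqa.lt_of_ne (σ.injective.ne (Fin.ne_of_gt (by omega)))
      exact h3142 (containsPattern_perm3142 (Fin.lt_def.2 (by omega)) (Fin.lt_def.2 (by omega))
        hiq (hcut pa₁ q (by omega) (by omega) (by omega)) hqa hi)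
    refine ⟨i, hai, i.is_lt, .inl fun p q hp hpi hq => (?_ : σ p ≤ σ pa).trans_lt (hright q hq)⟩
    rcases hp.eq_or_lt with hp | hp
    · exact (congrArg σ (Fin.ext (by omega) : p = pa)).le
    · exact not_lt.1 fun h => hmin p hpi ⟨hp, h⟩
  · push Not at habove
    refine ⟨a + 1, by omega, by omega, .inr fun p q hp hpa₁ hq =>
      complement_lt_complement.2 ?_⟩
    obtain rfl : p = pa := Fin.ext (by omega)
    exact (habove q (by omega)).lt_of_ne (σ.injective.ne (Fin.ne_of_gt (by omega)))

lemma isSumCut_or_complement_of_add_two_eq {n : ℕ} (σ : Perm (Fin n)) {a : ℕ}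
    (ha : a + 2 = n) : IsSumCut σ a (a + 1) ∨ IsSumCut (complement σ) a (a + 1) := by
  obtain ⟨pa, hpa⟩ : ∃ pa : Fin n, pa.val = a := ⟨⟨a, by omega⟩, rfl⟩
  obtain ⟨pa₁, hpa₁⟩ : ∃ pa₁ : Fin n, pa₁.val = a + 1 := ⟨⟨a + 1, by omega⟩, rfl⟩
  have hsingle : ∀ p q : Fin n, a ≤ p.val → p.val < a + 1 → a + 1 ≤ q.val → p = pa ∧ q = pa₁ :=
    fun p q _ _ _ => ⟨Fin.ext (by omega), Fin.ext (by omega)⟩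
  rcases lt_or_gt_of_ne (σ.injective.ne (Fin.ne_of_lt (Fin.lt_def.2 (by omega)) : pa ≠ pa₁))
    with h | h
  · exact .inl fun p q hp hpa hq => by
      obtain ⟨rfl, rfl⟩ := hsingle p q hp hpa hq
      exact h
  · exact .inr fun p q hp hpa hq => by
      obtain ⟨rfl, rfl⟩ := hsingle p q hp hpa hq
      exact complement_lt_complement.2 h

theorem exists_isSumCut_or_complement {n : ℕ} {σ : Perm (Fin n)}
    (h2413 : AvoidsPattern σ perm2413) (h3142 : AvoidsPattern σ perm3142) {a : ℕ}
    (ha : a + 1 < n) : ∃ k, a < k ∧ k < n ∧ (IsSumCut σ a k ∨ IsSumCut (complement σ) a k) := by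
  have h3142' : AvoidsPattern (complement σ) perm3142 := by
    rwa [AvoidsPattern, containsPattern_complement_iff, complement_perm3142]
  induction (show a ≤ n - 2 by omega) using Nat.decreasingInduction with
  | self =>
    exact ⟨n - 2 + 1, by omega, by omega,
      isSumCut_or_complement_of_add_two_eq σ (a := n - 2) (by omega)⟩
  | of_succ a ha' ih =>
    obtain ⟨k', hak', hk'n, hcut | hcut⟩ := ih (by omega)
    · exact exists_isSumCut_or_complement_of_isSumCut_succ h3142 hak' hk'n hcut
    · obtain ⟨k, hak, hkn, h⟩ :=
        exists_isSumCut_or_complement_of_isSumCut_succ h3142' hak' hk'n hcut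
      rw [complement_complement] at h
      exact ⟨k, hak, hkn, h.symm⟩

lemma exists_eq_directSum_of_isSumCut {k l : ℕ} {σ : Perm (Fin (k + l))}
    (hσ : IsSumCut σ 0 k) : ∃ (σ₁ : Perm (Fin k)) (σ₂ : Perm (Fin l)), σ = directSum σ₁ σ₂ := by
  have hcut (i : Fin k) (j : Fin l) : σ (Fin.castAdd l i) < σ (Fin.natAdd k j) :=
    hσ _ _ (Nat.zero_le _) i.is_lt (Nat.le_add_right k j)
  -- otherwise the `l` entries right of the cut would take `l` values above `σ i ≥ k`
  have hlow (i : Fin k) : (σ (Fin.castAdd l i)).val < k := by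
    by_contra! hi
    have := Finset.card_le_card_of_injOn (s := Finset.univ)
      (t := Finset.Ioi (σ (Fin.castAdd l i))) (fun j => σ (Fin.natAdd k j))
      (fun j _ => Finset.mem_Ioi.2 (hcut i j)) ((σ.injective.comp (Fin.natAdd_injective l k)).injOn)
    simp only [Finset.card_univ, Fintype.card_fin, Fin.card_Ioi] at this
    omega
  let σ₁ : Perm (Fin k) := Equiv.ofBijective (fun i => ⟨_, hlow i⟩) <|
    Finite.injective_iff_bijective.1 fun i j hij =>
      Fin.castAdd_injective k l (σ.injective (Fin.ext (Fin.mk.inj hij)))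
  have hhigh (j : Fin l) : k ≤ (σ (Fin.natAdd k j)).val := by
    by_contra! hj
    obtain ⟨i, hi⟩ := σ₁.surjective ⟨_, hj⟩
    have := congrArg Fin.val (σ.injective (Fin.ext (Fin.mk.inj hi)))
    simp only [Fin.val_castAdd, Fin.val_natAdd] at this
    omega
  let σ₂ : Perm (Fin l) := Equiv.ofBijective
    (fun j => ⟨(σ (Fin.natAdd k j)).val - k, by have := hhigh j; omega⟩) <|
    Finite.injective_iff_bijective.1 fun i j hij => by
      have := hhigh i; have := hhigh j
      exact Fin.natAdd_injective l k (σ.injective (Fin.ext (by have := Fin.mk.inj hij; omega)))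
  refine ⟨σ₁, σ₂, Equiv.ext fun x => ?_⟩
  induction x using Fin.addCases with
  | left i =>
    rw [directSum_castAdd]
    exact Fin.ext rfl
  | right j =>
    rw [directSum_natAdd]
    exact Fin.ext (by simp [σ₂, hhigh j])

theorem separable_of_avoidsPattern_perm2413_perm3142 {n : ℕ} (hn : 0 < n) {σ : Perm (Fin n)}
    (h2413 : AvoidsPattern σ perm2413) (h3142 : AvoidsPattern σ perm3142) : Separable σ := by
  induction n using Nat.strong_induction_on with
  | _ n ih =>
  have ih' {m : ℕ} (τ : Perm (Fin m)) (hm : 0 < m) (hmn : m < n) (hτ : ContainsPattern σ τ) :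
      Separable τ :=
    ih m hmn hm (mt hτ.trans h2413) (mt hτ.trans h3142)
  obtain rfl | hn1 : n = 1 ∨ 1 < n := by omega
  · rw [Subsingleton.elim σ (Equiv.refl _)]
    exact .single
  obtain ⟨k, hk, hkn, hcut | hcut⟩ := exists_isSumCut_or_complement h2413 h3142 hn1
  all_goals obtain ⟨l, rfl⟩ : ∃ l, n = k + l := ⟨n - k, by omega⟩
  · obtain ⟨σ₁, σ₂, rfl⟩ := exists_eq_directSum_of_isSumCut hcut
    exact .dsum (ih' σ₁ hk (by omega) (containsPattern_directSum_left σ₁ σ₂))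
      (ih' σ₂ (by omega) (by omega) (containsPattern_directSum_right σ₁ σ₂))
  · obtain ⟨τ₁, τ₂, hτ⟩ := exists_eq_directSum_of_isSumCut hcut
    have hσ : σ = skewSum (complement τ₁) (complement τ₂) := by
      rw [← complement_directSum, ← hτ, complement_complement]
    have h₁ : ContainsPattern σ (complement τ₁) :=
      containsPattern_complement_iff.1 (hτ ▸ containsPattern_directSum_left τ₁ τ₂)
    have h₂ : ContainsPattern σ (complement τ₂) :=
      containsPattern_complement_iff.1 (hτ ▸ containsPattern_directSum_right τ₁ τ₂)
    rw [hσ]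
    exact .ssum (ih' _ hk (by omega) h₁) (ih' _ (by omega) (by omega) h₂)

/-- A permutation avoids both 2413 and 3142 iff it is separable. -/
theorem separable_iff_avoids_2413_3142 {n : ℕ} (hn : 0 < n) (σ : Equiv.Perm (Fin n)) :
    (AvoidsPattern σ perm2413 ∧ AvoidsPattern σ perm3142) ↔ Separable σ :=
  ⟨fun h => separable_of_avoidsPattern_perm2413_perm3142 hn h.1 h.2,
    Separable.avoidsPattern_perm2413_perm3142⟩
end

section
/- The generating function of the separable permutation counts evaluated at x = 3 − 2√2 converges and equals √2 − 1, i.e., ∑_{n=1}^∞ s_n (3 − 2√2)^n = √2 − 1. -/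
/-!
A separable permutation of size at least two is sum- or skew-decomposable but not both, and
reversing the values exchanges the two kinds; a sum-decomposable one is cut uniquely, at its first
sum split, into a sum-indecomposable part and an arbitrary separable part. Hence `a n = s (n + 1)`
satisfies `a (n + 1) = a n + ∑_{i + j = n} a i * a j`, so `g n = a n * x ^ (n + 1)` satisfies
`g (n + 1) = x * g n + ∑_{i + j = n} g i * g j`. The partial sums of `g` then stay below every
nonnegative fixed point `L` of `p ↦ x + x p + p²`, so the series converges, and its sum `S`
satisfies `S = x + x S + S²`. For `x = 3 - 2√2 = (√2 - 1)²` this quadratic has the double root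
`√2 - 1`.
-/

open Equiv Finset Filter Topology

section ApplyVal

variable {k l : ℕ} (σ : Perm (Fin k)) (τ : Perm (Fin l))

lemma directSum_apply_val_of_lt (i : Fin (k + l)) (h : (i : ℕ) < k) :
    (directSum σ τ i : ℕ) = σ ⟨i, h⟩ := by
  obtain ⟨j, rfl⟩ : ∃ j : Fin k, i = Fin.castAdd l j := ⟨⟨i, h⟩, rfl⟩
  simp [directSum]

lemma directSum_apply_val_of_le (i : Fin (k + l)) (h : k ≤ (i : ℕ)) :
    (directSum σ τ i : ℕ) = k + τ ⟨i - k, by omega⟩ := by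
  obtain ⟨j, rfl⟩ : ∃ j : Fin l, i = Fin.natAdd k j :=
    ⟨⟨i - k, by omega⟩, Fin.ext (by simp; omega)⟩
  simp [directSum]

lemma skewSum_apply_val_of_lt (i : Fin (k + l)) (h : (i : ℕ) < k) :
    (skewSum σ τ i : ℕ) = l + σ ⟨i, h⟩ := by
  obtain ⟨j, rfl⟩ : ∃ j : Fin k, i = Fin.castAdd l j := ⟨⟨i, h⟩, rfl⟩
  simp [skewSum, add_comm]

lemma skewSum_apply_val_of_le (i : Fin (k + l)) (h : k ≤ (i : ℕ)) :
    (skewSum σ τ i : ℕ) = τ ⟨i - k, by omega⟩ := by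
  obtain ⟨j, rfl⟩ : ∃ j : Fin l, i = Fin.natAdd k j :=
    ⟨⟨i - k, by omega⟩, Fin.ext (by simp; omega)⟩
  simp [skewSum]

end ApplyVal

def IsSumSplit {n : ℕ} (π : Perm (Fin n)) (k : ℕ) : Prop :=
  ∀ i : Fin n, (i : ℕ) < k ↔ (π i : ℕ) < k

def IsSkewSplit {n : ℕ} (π : Perm (Fin n)) (k : ℕ) : Prop :=
  ∀ i : Fin n, (i : ℕ) < k ↔ n - k ≤ (π i : ℕ)

def IsSumDecomposable {n : ℕ} (π : Perm (Fin n)) : Prop :=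
  ∃ k, 0 < k ∧ k < n ∧ IsSumSplit π k

def IsSkewDecomposable {n : ℕ} (π : Perm (Fin n)) : Prop :=
  ∃ k, 0 < k ∧ k < n ∧ IsSkewSplit π k

lemma Separable.pos {n : ℕ} {π : Perm (Fin n)} (h : Separable π) : 0 < n := by
  induction h <;> omega

lemma isSumSplit_directSum {k l : ℕ} (σ : Perm (Fin k)) (τ : Perm (Fin l)) :
    IsSumSplit (directSum σ τ) k := by
  intro i
  rcases lt_or_ge (i : ℕ) k with h | h
  · simp [h, directSum_apply_val_of_lt σ τ i h]
  · simp [Nat.not_lt_of_le h, directSum_apply_val_of_le σ τ i h]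

lemma isSkewSplit_skewSum {k l : ℕ} (σ : Perm (Fin k)) (τ : Perm (Fin l)) :
    IsSkewSplit (skewSum σ τ) k := by
  intro i
  rcases lt_or_ge (i : ℕ) k with h | h
  · simp [h, skewSum_apply_val_of_lt σ τ i h]
  · have := (τ ⟨i - k, by omega⟩).2
    simp only [Nat.not_lt_of_le h, false_iff, skewSum_apply_val_of_le σ τ i h]
    omega

/-- The first and the last position tell the two kinds of splits apart. -/
lemma IsSumDecomposable.not_isSkewDecomposable {n : ℕ} {π : Perm (Fin n)}
    (hsum : IsSumDecomposable π) : ¬ IsSkewDecomposable π := by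
  obtain ⟨k, hk0, hkn, hs⟩ := hsum
  rintro ⟨j, hj0, hjn, hcs⟩
  have := hs ⟨0, by omega⟩
  have := hcs ⟨0, by omega⟩
  have := hs ⟨n - 1, by omega⟩
  have := hcs ⟨n - 1, by omega⟩
  have := (π ⟨0, by omega⟩).2
  have := (π ⟨n - 1, by omega⟩).2
  simp only at *
  omega

def permCast {m n : ℕ} (h : m = n) (π : Perm (Fin m)) : Perm (Fin n) :=
  (finCongr h).permCongr π

lemma permCast_apply_val {m n : ℕ} (h : m = n) (π : Perm (Fin m)) (i : Fin n) :
    (permCast h π i : ℕ) = π ⟨i, by omega⟩ := by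
  subst h
  simp [permCast]

lemma Separable.permCast {m n : ℕ} (h : m = n) {π : Perm (Fin m)} (hs : Separable π) :
    Separable (permCast h π) := by
  subst h
  convert hs
  ext
  simp [_root_.permCast]

lemma IsSumSplit.inv {n k : ℕ} {π : Perm (Fin n)} (hs : IsSumSplit π k) :
    IsSumSplit π⁻¹ k :=
  fun i => by simpa using (hs (π⁻¹ i)).symm

section SplitParts

variable {n : ℕ} (π : Perm (Fin n))

def splitLeft (k : ℕ) (hk : k ≤ n) (hs : IsSumSplit π k) : Perm (Fin k) where
  toFun i := ⟨π ⟨i, by omega⟩, (hs _).1 i.2⟩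
  invFun i := ⟨π⁻¹ ⟨i, by omega⟩, (hs.inv _).1 i.2⟩
  left_inv i := by ext; simp
  right_inv i := by ext; simp

def splitRight (k l : ℕ) (h : n = k + l) (hs : IsSumSplit π k) : Perm (Fin l) where
  toFun j := ⟨π ⟨k + j, by omega⟩ - k, by
    have := (hs ⟨k + j, by omega⟩).not.1 (by simp)
    have := (π ⟨k + j, by omega⟩).2
    omega⟩
  invFun j := ⟨π⁻¹ ⟨k + j, by omega⟩ - k, by
    have := (hs.inv ⟨k + j, by omega⟩).not.1 (by simp)
    have := (π⁻¹ ⟨k + j, by omega⟩).2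
    omega⟩
  left_inv j := by
    have := (hs ⟨k + j, by omega⟩).not.1 (by simp)
    have e : (⟨k + (π ⟨k + j, by omega⟩ - k), by omega⟩ : Fin n)
        = π ⟨k + j, by omega⟩ :=
      Fin.ext (by simp only; omega)
    ext
    simp [e]
  right_inv j := by
    have := (hs.inv ⟨k + j, by omega⟩).not.1 (by simp)
    have e : (⟨k + (π⁻¹ ⟨k + j, by omega⟩ - k), by omega⟩ : Fin n)
        = π⁻¹ ⟨k + j, by omega⟩ :=
      Fin.ext (by simp only; omega)
    ext
    simp only [e]
    simp

lemma splitLeft_apply_val (k : ℕ) (hk : k ≤ n) (hs : IsSumSplit π k) (i : Fin k) :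
    (splitLeft π k hk hs i : ℕ) = π ⟨i, by omega⟩ := rfl

lemma splitRight_apply_val (k l : ℕ) (h : n = k + l) (hs : IsSumSplit π k) (j : Fin l) :
    (splitRight π k l h hs j : ℕ) = π ⟨k + j, by omega⟩ - k := rfl

end SplitParts

lemma directSum_splitLeft_splitRight {k l : ℕ} (π : Perm (Fin (k + l))) (hk : k ≤ k + l)
    (hs : IsSumSplit π k) : directSum (splitLeft π k hk hs) (splitRight π k l rfl hs) = π := by
  ext i
  rcases lt_or_ge (i : ℕ) k with hi | hi
  · rw [directSum_apply_val_of_lt _ _ i hi, splitLeft_apply_val]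
  · have := (hs i).not.1 (by omega)
    rw [directSum_apply_val_of_le _ _ i hi, splitRight_apply_val]
    have e : (⟨k + (i - k), by omega⟩ : Fin (k + l)) = i := Fin.ext (by simp only; omega)
    simp only [e]
    omega

section DirectSumSplits

variable {k₁ l₁ : ℕ} (σ : Perm (Fin k₁)) (τ : Perm (Fin l₁))

lemma splitLeft_directSum (hk : k₁ ≤ k₁ + l₁) (hs : IsSumSplit (directSum σ τ) k₁) :
    splitLeft (directSum σ τ) k₁ hk hs = σ := by
  ext i
  rw [splitLeft_apply_val, directSum_apply_val_of_lt _ _ _ i.2]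

lemma splitRight_directSum (hs : IsSumSplit (directSum σ τ) k₁) :
    splitRight (directSum σ τ) k₁ l₁ rfl hs = τ := by
  ext j
  rw [splitRight_apply_val, directSum_apply_val_of_le _ _ _ (by simp)]
  simp

lemma IsSumSplit.of_directSum_left {k : ℕ} (hs : IsSumSplit (directSum σ τ) k) :
    IsSumSplit σ k := by
  intro i
  simpa [directSum_apply_val_of_lt σ τ ⟨i, by omega⟩ i.2] using hs ⟨i, by omega⟩

lemma IsSumSplit.of_directSum_right {k : ℕ} (hs : IsSumSplit (directSum σ τ) k) :
    IsSumSplit τ (k - k₁) := by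
  intro j
  have := hs ⟨k₁ + j, by omega⟩
  simp only [directSum_apply_val_of_le σ τ ⟨k₁ + j, by omega⟩ (by simp),
    add_tsub_cancel_left, Fin.eta] at this
  omega

lemma splitLeft_directSum_of_le {k : ℕ} (hk : k ≤ k₁) (hk' : k ≤ k₁ + l₁)
    (hs : IsSumSplit (directSum σ τ) k) (hsσ : IsSumSplit σ k) :
    splitLeft (directSum σ τ) k hk' hs = splitLeft σ k hk hsσ := by
  ext i
  rw [splitLeft_apply_val, splitLeft_apply_val,
    directSum_apply_val_of_lt σ τ ⟨i, by omega⟩ (by simp only; omega)]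

lemma splitRight_directSum_of_lt {k l : ℕ} (hk : k < k₁) (hn : k₁ + l₁ = k + l)
    (hs : IsSumSplit (directSum σ τ) k) (hsσ : IsSumSplit σ k) :
    splitRight (directSum σ τ) k l hn hs
      = permCast (by omega) (directSum (splitRight σ k (k₁ - k) (by omega) hsσ) τ) := by
  ext j
  rw [splitRight_apply_val, permCast_apply_val]
  rcases lt_or_ge (j : ℕ) (k₁ - k) with hj | hj
  · rw [directSum_apply_val_of_lt _ τ ⟨j, by omega⟩ hj, splitRight_apply_val,
      directSum_apply_val_of_lt σ τ ⟨k + j, by omega⟩ (by simp only; omega)]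
  · have e : (⟨k + j - k₁, by omega⟩ : Fin l₁) = ⟨j - (k₁ - k), by omega⟩ :=
      Fin.ext (by simp only; omega)
    rw [directSum_apply_val_of_le _ τ ⟨j, by omega⟩ hj,
      directSum_apply_val_of_le σ τ ⟨k + j, by omega⟩ (by simp only; omega)]
    simp only [e]
    omega

lemma splitLeft_directSum_of_ge {k : ℕ} (hk : k₁ ≤ k) (hkn : k ≤ k₁ + l₁)
    (hs : IsSumSplit (directSum σ τ) k) (hsτ : IsSumSplit τ (k - k₁)) :
    splitLeft (directSum σ τ) k hkn hs
      = permCast (by omega) (directSum σ (splitLeft τ (k - k₁) (by omega) hsτ)) := by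
  ext i
  rw [splitLeft_apply_val, permCast_apply_val]
  rcases lt_or_ge (i : ℕ) k₁ with hi | hi
  · rw [directSum_apply_val_of_lt σ τ ⟨i, by omega⟩ hi,
      directSum_apply_val_of_lt σ _ ⟨i, by omega⟩ hi]
  · rw [directSum_apply_val_of_le σ τ ⟨i, by omega⟩ hi,
      directSum_apply_val_of_le σ _ ⟨i, by omega⟩ hi, splitLeft_apply_val]

lemma splitRight_directSum_of_ge {k l : ℕ} (hk : k₁ ≤ k) (hn : k₁ + l₁ = k + l)
    (hs : IsSumSplit (directSum σ τ) k) (hsτ : IsSumSplit τ (k - k₁)) :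
    splitRight (directSum σ τ) k l hn hs = splitRight τ (k - k₁) l (by omega) hsτ := by
  ext j
  have e : (⟨k + j - k₁, by omega⟩ : Fin l₁) = ⟨k - k₁ + j, by omega⟩ :=
    Fin.ext (by simp only; omega)
  rw [splitRight_apply_val, splitRight_apply_val,
    directSum_apply_val_of_le σ τ ⟨k + j, by omega⟩ (by simp only; omega)]
  simp only [e]
  omega

end DirectSumSplits

lemma Separable.splitLeft_and_splitRight {n : ℕ} {π : Perm (Fin n)} (hπ : Separable π)
    (k l : ℕ) (hn : n = k + l) (hk : 0 < k) (hl : 0 < l) (hs : IsSumSplit π k) :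
    Separable (splitLeft π k (by omega) hs) ∧ Separable (splitRight π k l hn hs) := by
  induction hπ generalizing k l with
  | single => omega
  | @dsum k₁ l₁ σ τ hσ hτ ihσ ihτ =>
    have := hσ.pos
    have := hτ.pos
    rcases lt_trichotomy k k₁ with hlt | rfl | hgt
    · have hsσ := hs.of_directSum_left σ τ
      obtain ⟨hα, hβ⟩ := ihσ k (k₁ - k) (by omega) hk (by omega) hsσ
      rw [splitLeft_directSum_of_le σ τ hlt.le _ hs hsσ,
        splitRight_directSum_of_lt σ τ hlt hn hs hsσ]
      exact ⟨hα, (hβ.dsum hτ).permCast _⟩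
    · obtain rfl : l = l₁ := by omega
      rw [splitLeft_directSum, splitRight_directSum]
      exact ⟨hσ, hτ⟩
    · have hsτ := hs.of_directSum_right σ τ
      obtain ⟨hα, hβ⟩ := ihτ (k - k₁) l (by omega) (by omega) hl hsτ
      rw [splitLeft_directSum_of_ge σ τ hgt.le _ hs hsτ,
        splitRight_directSum_of_ge σ τ hgt.le hn hs hsτ]
      exact ⟨(hσ.dsum hα).permCast _, hβ⟩
  | @ssum k₁ l₁ σ τ hσ hτ =>
    have := hσ.pos
    have := hτ.pos
    exact absurd ⟨k₁, by omega, by omega, isSkewSplit_skewSum σ τ⟩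
      (IsSumDecomposable.not_isSkewDecomposable ⟨k, hk, by omega, hs⟩)

lemma trans_revPerm_apply_val {n : ℕ} (π : Perm (Fin n)) (i : Fin n) :
    (π.trans Fin.revPerm i : ℕ) = n - (π i + 1) := by
  simp [Fin.val_rev]

lemma directSum_trans_revPerm {k l : ℕ} (σ : Perm (Fin k)) (τ : Perm (Fin l)) :
    (directSum σ τ).trans Fin.revPerm
      = skewSum (σ.trans Fin.revPerm) (τ.trans Fin.revPerm) := by
  ext i
  rw [trans_revPerm_apply_val]
  rcases lt_or_ge (i : ℕ) k with hi | hi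
  · have := (σ ⟨i, hi⟩).2
    rw [directSum_apply_val_of_lt σ τ i hi, skewSum_apply_val_of_lt _ _ i hi,
      trans_revPerm_apply_val]
    omega
  · have := (τ ⟨i - k, by omega⟩).2
    rw [directSum_apply_val_of_le σ τ i hi, skewSum_apply_val_of_le _ _ i hi,
      trans_revPerm_apply_val]
    omega

lemma skewSum_trans_revPerm {k l : ℕ} (σ : Perm (Fin k)) (τ : Perm (Fin l)) :
    (skewSum σ τ).trans Fin.revPerm
      = directSum (σ.trans Fin.revPerm) (τ.trans Fin.revPerm) := by
  ext i
  rw [trans_revPerm_apply_val]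
  rcases lt_or_ge (i : ℕ) k with hi | hi
  · have := (σ ⟨i, hi⟩).2
    rw [skewSum_apply_val_of_lt σ τ i hi, directSum_apply_val_of_lt _ _ i hi,
      trans_revPerm_apply_val]
    omega
  · have := (τ ⟨i - k, by omega⟩).2
    rw [skewSum_apply_val_of_le σ τ i hi, directSum_apply_val_of_le _ _ i hi,
      trans_revPerm_apply_val]
    omega

lemma trans_revPerm_trans_revPerm {n : ℕ} (π : Perm (Fin n)) :
    (π.trans Fin.revPerm).trans Fin.revPerm = π := by
  ext
  simp

lemma Separable.trans_revPerm {n : ℕ} {π : Perm (Fin n)} (h : Separable π) :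
    Separable (π.trans Fin.revPerm) := by
  induction h with
  | single =>
    convert Separable.single
    ext i
    omega
  | dsum _ _ ihσ ihτ =>
    rw [directSum_trans_revPerm]
    exact ihσ.ssum ihτ
  | ssum _ _ ihσ ihτ =>
    rw [skewSum_trans_revPerm]
    exact ihσ.dsum ihτ

lemma isSumSplit_trans_revPerm_iff {n : ℕ} (π : Perm (Fin n)) (k : ℕ) :
    IsSumSplit (π.trans Fin.revPerm) k ↔ IsSkewSplit π k := by
  refine forall_congr' fun i => ?_
  have := (π i).2
  rw [trans_revPerm_apply_val]
  omega

lemma isSumDecomposable_trans_revPerm_iff {n : ℕ} (π : Perm (Fin n)) :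
    IsSumDecomposable (π.trans Fin.revPerm) ↔ IsSkewDecomposable π :=
  exists_congr fun k => by rw [isSumSplit_trans_revPerm_iff]

lemma Separable.isSumDecomposable_or_isSkewDecomposable {n : ℕ} {π : Perm (Fin n)}
    (h : Separable π) (hn : 2 ≤ n) : IsSumDecomposable π ∨ IsSkewDecomposable π := by
  cases h with
  | single => omega
  | dsum hσ hτ =>
    have := hσ.pos
    have := hτ.pos
    exact Or.inl ⟨_, by omega, by omega, isSumSplit_directSum _ _⟩
  | ssum hσ hτ =>
    have := hσ.pos
    have := hτ.pos
    exact Or.inr ⟨_, by omega, by omega, isSkewSplit_skewSum _ _⟩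

lemma Separable.isSkewDecomposable_iff_not_isSumDecomposable {n : ℕ} {π : Perm (Fin n)}
    (h : Separable π) (hn : 2 ≤ n) : IsSkewDecomposable π ↔ ¬ IsSumDecomposable π :=
  ⟨fun hskew hsum => hsum.not_isSkewDecomposable hskew,
    (h.isSumDecomposable_or_isSkewDecomposable hn).resolve_left⟩

lemma IsSumSplit.of_splitLeft {n k j : ℕ} {π : Perm (Fin n)} (hk : k ≤ n)
    (hs : IsSumSplit π k) (hjk : j ≤ k) (hsj : IsSumSplit (splitLeft π k hk hs) j) :
    IsSumSplit π j := by
  intro i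
  rcases lt_or_ge (i : ℕ) k with hik | hik
  · simpa [splitLeft_apply_val] using hsj ⟨i, hik⟩
  · have := hs i
    omega

def IsFirstSumSplit {n : ℕ} (π : Perm (Fin n)) (k : ℕ) : Prop :=
  IsSumSplit π k ∧ 0 < k ∧ k < n ∧ ∀ j, 0 < j → j < k → ¬ IsSumSplit π j

open scoped Classical in
noncomputable def firstSumSplit {n : ℕ} (π : Perm (Fin n)) : ℕ :=
  if h : IsSumDecomposable π then Nat.find h else 0

lemma isFirstSumSplit_iff {n : ℕ} {π : Perm (Fin n)} {k : ℕ} :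
    IsFirstSumSplit π k ↔ IsSumDecomposable π ∧ firstSumSplit π = k := by
  classical
  constructor
  · rintro ⟨hs, hk0, hkn, hmin⟩
    have h : IsSumDecomposable π := ⟨k, hk0, hkn, hs⟩
    refine ⟨h, ?_⟩
    rw [firstSumSplit, dif_pos h]
    exact (Nat.find_eq_iff h).2
      ⟨⟨hk0, hkn, hs⟩, fun j hjk ⟨hj0, _, hsj⟩ => hmin j hj0 hjk hsj⟩
  · rintro ⟨h, rfl⟩
    rw [firstSumSplit, dif_pos h]
    obtain ⟨hk0, hkn, hs⟩ := Nat.find_spec h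
    exact ⟨hs, hk0, hkn, fun j hj0 hjk hsj => Nat.find_min h hjk ⟨hj0, by omega, hsj⟩⟩

def firstSumSplitEquiv (k l : ℕ) (hk : 0 < k) (hl : 0 < l) :
    {π : Perm (Fin (k + l)) // Separable π ∧ IsFirstSumSplit π k} ≃
      {α : Perm (Fin k) // Separable α ∧ ¬ IsSumDecomposable α} ×
        {ρ : Perm (Fin l) // Separable ρ} where
  toFun π :=
    have hparts := π.2.1.splitLeft_and_splitRight k l rfl hk hl π.2.2.1
    (⟨splitLeft π.1 k (by omega) π.2.2.1, hparts.1, fun ⟨j, hj0, hjk, hsj⟩ =>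
        π.2.2.2.2.2 j hj0 hjk (IsSumSplit.of_splitLeft _ π.2.2.1 hjk.le hsj)⟩,
      ⟨splitRight π.1 k l rfl π.2.2.1, hparts.2⟩)
  invFun p :=
    ⟨directSum p.1.1 p.2.1, p.1.2.1.dsum p.2.2, isSumSplit_directSum _ _, hk, by omega,
      fun j hj0 hjk hsj => p.1.2.2 ⟨j, hj0, hjk, hsj.of_directSum_left _ _⟩⟩
  left_inv π := Subtype.ext (directSum_splitLeft_splitRight _ (by omega) π.2.2.1)
  right_inv p := Prod.ext
    (Subtype.ext (splitLeft_directSum _ _ (by omega) (isSumSplit_directSum _ _)))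
    (Subtype.ext (splitRight_directSum _ _ (isSumSplit_directSum _ _)))

noncomputable def numSepSumDec (n : ℕ) : ℕ :=
  Nat.card {π : Perm (Fin n) // Separable π ∧ IsSumDecomposable π}

noncomputable def numSepSumIndec (n : ℕ) : ℕ :=
  Nat.card {π : Perm (Fin n) // Separable π ∧ ¬ IsSumDecomposable π}

lemma numSep_eq_numSepSumDec_add_numSepSumIndec (n : ℕ) :
    numSep n = numSepSumDec n + numSepSumIndec n := by
  classical
  rw [numSep, numSepSumDec, numSepSumIndec, ← Nat.card_sum]
  exact Nat.card_congr ((Equiv.sumCompl _).symm.trans (Equiv.sumCongr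
    (Equiv.subtypeSubtypeEquivSubtypeInter _ _)
    (Equiv.subtypeSubtypeEquivSubtypeInter Separable fun π => ¬ IsSumDecomposable π)))

/-- Reversing the values exchanges sum- and skew-decomposable separable permutations. -/
lemma numSepSumIndec_eq_numSepSumDec {n : ℕ} (hn : 2 ≤ n) :
    numSepSumIndec n = numSepSumDec n := by
  have hinv : Function.Involutive fun π : Perm (Fin n) => π.trans Fin.revPerm :=
    trans_revPerm_trans_revPerm
  refine Nat.card_congr (hinv.toPerm _ |>.subtypeEquiv fun π => ?_)
  have hsep : Separable (π.trans Fin.revPerm) ↔ Separable π :=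
    ⟨fun h => trans_revPerm_trans_revPerm π ▸ h.trans_revPerm, Separable.trans_revPerm⟩
  simp only [Function.Involutive.coe_toPerm, hsep, isSumDecomposable_trans_revPerm_iff]
  exact and_congr_right fun h => (h.isSkewDecomposable_iff_not_isSumDecomposable hn).symm

lemma card_separable_isFirstSumSplit {n k : ℕ} (hk : 0 < k) (hkn : k < n) :
    Nat.card {π : Perm (Fin n) // Separable π ∧ IsFirstSumSplit π k}
      = numSepSumIndec k * numSep (n - k) := by
  obtain ⟨l, rfl⟩ := Nat.exists_eq_add_of_le hkn.le
  rw [Nat.card_congr (firstSumSplitEquiv k l hk (by omega)), Nat.card_prod,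
    numSepSumIndec, numSep, Nat.add_sub_cancel_left]

lemma numSepSumDec_eq_sum (n : ℕ) :
    numSepSumDec n = ∑ k ∈ Ico 1 n, numSepSumIndec k * numSep (n - k) := by
  classical
  rw [numSepSumDec, Nat.card_eq_fintype_card, Fintype.card_subtype,
    card_eq_sum_card_fiberwise (f := firstSumSplit) (t := Ico 1 n) fun π hπ => by
      obtain ⟨_, hk0, hkn, _⟩ := isFirstSumSplit_iff.2 ⟨(mem_filter.1 hπ).2.2, rfl⟩
      simp only [coe_Ico, Set.mem_Ico]
      omega]
  refine sum_congr rfl fun k hk => ?_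
  rw [← card_separable_isFirstSumSplit (by simp at hk; omega) (by simp at hk; omega),
    Nat.card_eq_fintype_card, Fintype.card_subtype, filter_filter]
  congr 1
  refine filter_congr fun π _ => ?_
  rw [isFirstSumSplit_iff, and_assoc]

lemma numSep_one : numSep 1 = 1 :=
  Nat.card_eq_one_iff_exists.2
    ⟨⟨_, Separable.single⟩, fun _ => Subtype.ext (Subsingleton.elim _ _)⟩

lemma numSepSumDec_one : numSepSumDec 1 = 0 :=
  Nat.card_eq_zero.2 (Or.inl ⟨fun ⟨_, _, _, hk0, hk1, _⟩ => by omega⟩)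

lemma two_mul_numSepSumIndec {k : ℕ} (hk : 0 < k) :
    2 * numSepSumIndec k = numSep k + if k = 1 then 1 else 0 := by
  rcases (by omega : k = 1 ∨ 2 ≤ k) with rfl | hk2
  · have := numSep_eq_numSepSumDec_add_numSepSumIndec 1
    rw [numSepSumDec_one, numSep_one] at this
    rw [numSep_one, if_pos rfl]
    omega
  · rw [numSep_eq_numSepSumDec_add_numSepSumIndec, numSepSumIndec_eq_numSepSumDec hk2,
      if_neg (by omega)]
    ring

lemma numSep_add_two (m : ℕ) :
    numSep (m + 2)
      = numSep (m + 1) + ∑ p ∈ antidiagonal m, numSep (p.1 + 1) * numSep (p.2 + 1) := by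
  calc numSep (m + 2) = 2 * numSepSumDec (m + 2) := by
        rw [numSep_eq_numSepSumDec_add_numSepSumIndec, numSepSumIndec_eq_numSepSumDec (by omega)]
        ring
    _ = ∑ k ∈ Ico 1 (m + 2), (numSep k + if k = 1 then 1 else 0) * numSep (m + 2 - k) := by
        rw [numSepSumDec_eq_sum, mul_sum]
        refine sum_congr rfl fun k hk => ?_
        rw [← two_mul_numSepSumIndec (by simp at hk; omega), mul_assoc]
    _ = ∑ i ∈ range (m + 1),
          (numSep (i + 1) + if i = 0 then 1 else 0) * numSep (m - i + 1) := by
        rw [sum_Ico_eq_sum_range]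
        refine sum_congr rfl fun i hi => ?_
        have := mem_range.1 hi
        rw [add_comm 1 i, show m + 2 - (i + 1) = m - i + 1 by omega]
        simp
    _ = _ := by
        rw [Nat.sum_antidiagonal_eq_sum_range_succ_mk]
        simp [add_mul, sum_add_distrib, add_comm]

section QuadraticRecurrence

variable {g : ℕ → ℝ} {b : ℝ}

lemma sum_range_sum_antidiagonal_le_sq (hg : ∀ n, 0 ≤ g n) (N : ℕ) :
    ∑ m ∈ range N, ∑ p ∈ antidiagonal m, g p.1 * g p.2
      ≤ (∑ i ∈ range N, g i) ^ 2 := by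
  simp only [Nat.sum_antidiagonal_eq_sum_range_succ (fun i j => g i * g j)]
  rw [sum_range_diag_flip N (fun i j => g i * g j), sq, sum_mul_sum]
  gcongr with i hi
  · exact fun j _ _ => mul_nonneg (hg i) (hg j)
  · omega

lemma sum_range_le_of_quadratic_rec (hg : ∀ n, 0 ≤ g n) (hb : 0 ≤ b)
    (hrec : ∀ n, g (n + 1) = b * g n + ∑ p ∈ antidiagonal n, g p.1 * g p.2)
    {L : ℝ} (hL0 : 0 ≤ L) (hL : g 0 + b * L + L ^ 2 = L) (N : ℕ) :
    ∑ i ∈ range N, g i ≤ L := by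
  induction N with
  | zero => simpa using hL0
  | succ N ih =>
    have hP : 0 ≤ ∑ i ∈ range N, g i := sum_nonneg fun i _ => hg i
    calc ∑ i ∈ range (N + 1), g i
        = g 0 + b * ∑ i ∈ range N, g i
            + ∑ m ∈ range N, ∑ p ∈ antidiagonal m, g p.1 * g p.2 := by
          simp only [sum_range_succ', hrec, sum_add_distrib, mul_sum]; ring
      _ ≤ g 0 + b * L + L ^ 2 := by
          gcongr
          exact (sum_range_sum_antidiagonal_le_sq hg N).trans (by gcongr)
      _ = L := hL

lemma summable_of_quadratic_rec (hg : ∀ n, 0 ≤ g n) (hb : 0 ≤ b)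
    (hrec : ∀ n, g (n + 1) = b * g n + ∑ p ∈ antidiagonal n, g p.1 * g p.2)
    {L : ℝ} (hL0 : 0 ≤ L) (hL : g 0 + b * L + L ^ 2 = L) : Summable g :=
  summable_of_sum_range_le hg (sum_range_le_of_quadratic_rec hg hb hrec hL0 hL)

lemma tsum_eq_of_quadratic_rec (hsum : Summable g)
    (hrec : ∀ n, g (n + 1) = b * g n + ∑ p ∈ antidiagonal n, g p.1 * g p.2) :
    ∑' n, g n = g 0 + b * ∑' n, g n + (∑' n, g n) ^ 2 := by
  have hnorm : Summable fun n => ‖g n‖ := hsum.norm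
  have hconv : Summable fun n => ∑ p ∈ antidiagonal n, g p.1 * g p.2 :=
    (summable_norm_sum_mul_antidiagonal_of_summable_norm hnorm hnorm).of_norm
  calc ∑' n, g n = g 0 + ∑' n, g (n + 1) := hsum.tsum_eq_zero_add
    _ = g 0 + ∑' n, (b * g n + ∑ p ∈ antidiagonal n, g p.1 * g p.2) := by simp only [hrec]
    _ = g 0 + b * ∑' n, g n + (∑' n, g n) ^ 2 := by
      rw [(hsum.mul_left b).tsum_add hconv, tsum_mul_left, sq,
        tsum_mul_tsum_eq_tsum_sum_antidiagonal_of_summable_norm hnorm hnorm, add_assoc]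

lemma quadratic_rec_mul_pow {a : ℕ → ℝ}
    (ha : ∀ n, a (n + 1) = a n + ∑ p ∈ antidiagonal n, a p.1 * a p.2)
    (t : ℝ) (hg : ∀ n, g n = a n * t ^ (n + 1)) (n : ℕ) :
    g (n + 1) = t * g n + ∑ p ∈ antidiagonal n, g p.1 * g p.2 := by
  simp only [hg, ha, add_mul, sum_mul]
  congr 1
  · ring
  · refine sum_congr rfl fun p hp => ?_
    rw [← mem_antidiagonal.1 hp]
    ring

end QuadraticRecurrence

/-- The generating function of the separable permutation counts converges at
`x = 3 - 2√2` and its value there is `√2 - 1`. -/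
theorem numSep_genFun_at_radius :
    Summable (fun n : ℕ => (numSep (n + 1) : ℝ) * (3 - 2 * Real.sqrt 2) ^ (n + 1)) ∧
    ∑' n : ℕ, (numSep (n + 1) : ℝ) * (3 - 2 * Real.sqrt 2) ^ (n + 1) = Real.sqrt 2 - 1 := by
  set g : ℕ → ℝ := fun n => (numSep (n + 1) : ℝ) * (3 - 2 * Real.sqrt 2) ^ (n + 1)
  have hsqrt : Real.sqrt 2 ^ 2 = 2 := Real.sq_sqrt (by norm_num)
  have hx : 0 < 3 - 2 * Real.sqrt 2 := by nlinarith [Real.sqrt_nonneg 2]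
  have hrec := quadratic_rec_mul_pow (g := g) (a := fun n => (numSep (n + 1) : ℝ))
    (fun n => by exact_mod_cast numSep_add_two n) _ fun _ => rfl
  have hg0 : g 0 = 3 - 2 * Real.sqrt 2 := by simp [g, numSep_one]
  have hfix : g 0 + (3 - 2 * Real.sqrt 2) * (Real.sqrt 2 - 1) + (Real.sqrt 2 - 1) ^ 2
      = Real.sqrt 2 - 1 := by
    rw [hg0]
    nlinarith
  have hsum : Summable g :=
    summable_of_quadratic_rec (fun n => by positivity) hx.le hrec (by nlinarith [Real.sqrt_nonneg 2]) hfix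
  refine ⟨hsum, ?_⟩
  have hS := tsum_eq_of_quadratic_rec hsum hrec
  -- `x = 3 - 2√2 = (√2 - 1)²` makes `√2 - 1` a double root of `S = x + x S + S²`
  have : (∑' n, g n - (Real.sqrt 2 - 1)) ^ 2 = 0 := by
    rw [hg0] at hS
    nlinarith
  exact sub_eq_zero.1 (pow_eq_zero_iff two_ne_zero |>.1 this)
end
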